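/- arXiv:2307.05295 — 2 statements merged into one kernel-verified Lean document; each statement's English description precedes it below -/
import Mathlib

section
/- Let a, a₀ ∈ ℂ and b, b₀ > 0, and set γ₀ = |a₀|²/b₀. Then log(1 + |a|²/b) ≥ log(1+γ₀) − γ₀ + (2/b₀)·Re(a₀* · a) − (γ₀/(b₀ + |a₀|²))·(b + |a|²), where a₀* denotes complex conjugation and log is the natural logarithm. -/
/-!
Write `γ = ‖a‖² / b` and `γ₀ = ‖a₀‖² / b₀`. Concavity of `log`, through its tangent at `1 + γ`,
gives `log (1 + γ) ≥ log (1 + γ₀) + 1 - (1 + γ₀) / (1 + γ)`, and the right-hand side equals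
`log (1 + γ₀) - γ₀ + (1 + γ₀) ‖a‖² / (b + ‖a‖²)`.
The quadratic-over-linear function `(x, y) ↦ ‖x‖² / y` is jointly convex, so it lies above its
tangent plane at `(a₀, b₀ + ‖a₀‖²)`; as `(1 + γ₀) / (b₀ + ‖a₀‖²) = 1 / b₀`, this tangent plane scaled
by `1 + γ₀` is the linear-quadratic part of the minorant.
-/

open RealInnerProductSpace

theorem Real.log_add_one_sub_div_le_log {x y : ℝ} (hx : 0 < x) (hy : 0 < y) :
    Real.log x + 1 - x / y ≤ Real.log y := by
  have h := Real.log_le_sub_one_of_pos (div_pos hx hy)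
  rw [Real.log_div hx.ne' hy.ne'] at h
  linarith

theorem two_mul_inner_div_sub_le_norm_sq_div {F : Type*} [NormedAddCommGroup F]
    [InnerProductSpace ℝ F] (x₀ x : F) {y₀ y : ℝ} (hy₀ : 0 < y₀) (hy : 0 < y) :
    2 * ⟪x₀, x⟫ / y₀ - ‖x₀‖ ^ 2 * y / y₀ ^ 2 ≤ ‖x‖ ^ 2 / y := by
  have hsq : 0 ≤ ‖y₀ • x - y • x₀‖ ^ 2 := sq_nonneg _
  rw [norm_sub_sq_real, real_inner_smul_left, real_inner_smul_right, norm_smul, norm_smul,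
    Real.norm_of_nonneg hy₀.le, Real.norm_of_nonneg hy.le, real_inner_comm] at hsq
  rw [div_sub_div _ _ hy₀.ne' (by positivity), div_le_div_iff₀ (by positivity) hy]
  nlinarith [mul_nonneg hy.le hsq]

theorem shannon_rate_quadratic_minorant (a a₀ : ℂ) (b b₀ : ℝ) (hb : 0 < b) (hb₀ : 0 < b₀) :
    Real.log (1 + ‖a₀‖ ^ 2 / b₀) - ‖a₀‖ ^ 2 / b₀
      + (2 / b₀) * ((starRingEnd ℂ a₀) * a).re
      - (‖a₀‖ ^ 2 / b₀) / (b₀ + ‖a₀‖ ^ 2) * (b + ‖a‖ ^ 2)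
    ≤ Real.log (1 + ‖a‖ ^ 2 / b) := by
  set γ₀ := ‖a₀‖ ^ 2 / b₀
  have hs₀ : 0 < b₀ + ‖a₀‖ ^ 2 := by positivity
  have hs : 0 < b + ‖a‖ ^ 2 := by positivity
  have hre : ((starRingEnd ℂ a₀) * a).re = ⟪a₀, a⟫ := by rw [Complex.inner, mul_comm]
  calc Real.log (1 + γ₀) - γ₀ + (2 / b₀) * ((starRingEnd ℂ a₀) * a).re
        - γ₀ / (b₀ + ‖a₀‖ ^ 2) * (b + ‖a‖ ^ 2)
      = Real.log (1 + γ₀) - γ₀ + (1 + γ₀) * (2 * ⟪a₀, a⟫ / (b₀ + ‖a₀‖ ^ 2)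
          - ‖a₀‖ ^ 2 * (b + ‖a‖ ^ 2) / (b₀ + ‖a₀‖ ^ 2) ^ 2) := by
        rw [hre]; unfold γ₀; field_simp; ring
    _ ≤ Real.log (1 + γ₀) - γ₀ + (1 + γ₀) * (‖a‖ ^ 2 / (b + ‖a‖ ^ 2)) := by
        gcongr
        exact two_mul_inner_div_sub_le_norm_sq_div a₀ a hs₀ hs
    _ = Real.log (1 + γ₀) + 1 - (1 + γ₀) / (1 + ‖a‖ ^ 2 / b) := by
        unfold γ₀; field_simp; ring
    _ ≤ Real.log (1 + ‖a‖ ^ 2 / b) :=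
        Real.log_add_one_sub_div_le_log (by positivity) (by positivity)
end

section
/- Let Θ = [[θ₁₁, θ₁₂],[θ₁₂, θ₂₂]] be a 2×2 complex symmetric matrix with Θ·Θᴴ = I and θ₁₂ ≠ 0. Then |θ₁₁| = |θ₂₂| and θ₂₂ = −θ₁₁* · e^{2i·arg(θ₁₂)}, where θ₁₁* is the complex conjugate of θ₁₁ and arg(θ₁₂) is the argument of θ₁₂. -/
/-! Comparing the squared norms of the two rows of a unitary symmetric `!![a, b; b, d]` gives
`‖a‖ = ‖d‖`; orthogonality of the rows gives `d * conj b = -conj a * b`, and dividing by `conj b`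
uses `b = exp (2 i arg b) * conj b`. -/

open ComplexConjugate

namespace Matrix

theorem conjTranspose_fin_two {R : Type*} [Star R] (a b c d : R) :
    !![a, b; c, d]ᴴ = !![star a, star c; star b, star d] := by
  ext i j
  fin_cases i <;> fin_cases j <;> rfl

theorem fin_two_mul_conjTranspose_self {R : Type*} [Semiring R] [StarRing R] (a b c d : R) :
    !![a, b; c, d] * !![a, b; c, d]ᴴ =
      !![a * star a + b * star b, a * star c + b * star d;
        c * star a + d * star b, c * star c + d * star d] := by
  rw [conjTranspose_fin_two, mul_fin_two]

theorem fin_two_symm_mul_conjTranspose_eq_one {R : Type*} [Semiring R] [StarRing R] {a b d : R}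
    (h : !![a, b; b, d] * !![a, b; b, d]ᴴ = 1) :
    a * star a + b * star b = 1 ∧ b * star a + d * star b = 0 ∧ b * star b + d * star d = 1 := by
  rw [fin_two_mul_conjTranspose_self, one_fin_two, ← Matrix.ext_iff] at h
  exact ⟨h 0 0, h 1 0, h 1 1⟩

theorem norm_eq_of_fin_two_symm_mul_conjTranspose_eq_one {𝕜 : Type*} [RCLike 𝕜] {a b d : 𝕜}
    (h : !![a, b; b, d] * !![a, b; b, d]ᴴ = 1) : ‖a‖ = ‖d‖ := by
  obtain ⟨h00, -, h11⟩ := fin_two_symm_mul_conjTranspose_eq_one h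
  have hsq : ((‖a‖ ^ 2 : ℝ) : 𝕜) = ((‖d‖ ^ 2 : ℝ) : 𝕜) := by
    push_cast
    rw [← RCLike.mul_conj, ← RCLike.mul_conj]
    exact add_right_cancel (h00.trans (h11.symm.trans (add_comm _ _)))
  exact (sq_eq_sq₀ (norm_nonneg a) (norm_nonneg d)).mp (RCLike.ofReal_injective hsq)

end Matrix

namespace Complex

theorem exp_two_mul_I_mul_arg_mul_conj (z : ℂ) : exp (2 * I * arg z) * conj z = z := by
  calc exp (2 * I * arg z) * conj z = exp (2 * I * arg z) * conj (‖z‖ * exp (arg z * I)) := by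
        rw [norm_mul_exp_arg_mul_I]
    _ = ‖z‖ * exp (2 * I * arg z + conj (arg z * I)) := by
        rw [map_mul, ← exp_conj, exp_add, conj_ofReal]; ring
    _ = ‖z‖ * exp (arg z * I) := by
        congr 2; simp only [map_mul, conj_ofReal, conj_I]; ring
    _ = z := norm_mul_exp_arg_mul_I z

end Complex

open Matrix in
theorem bdris_unitary_phase_relation (θ11 θ12 θ22 : ℂ)
    (hU : !![θ11, θ12; θ12, θ22] * (!![θ11, θ12; θ12, θ22])ᴴ = 1)
    (h12 : θ12 ≠ 0) :
    ‖θ11‖ = ‖θ22‖ ∧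
    θ22 = -(starRingEnd ℂ θ11) * Complex.exp (2 * Complex.I * (θ12.arg : ℂ)) := by
  obtain ⟨-, hoff, -⟩ := fin_two_symm_mul_conjTranspose_eq_one hU
  rw [Complex.star_def] at hoff
  refine ⟨norm_eq_of_fin_two_symm_mul_conjTranspose_eq_one hU,
    mul_right_cancel₀ ((map_ne_zero (starRingEnd ℂ)).mpr h12) ?_⟩
  linear_combination hoff + conj θ11 * Complex.exp_two_mul_I_mul_arg_mul_conj θ12
end
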